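/- arXiv:2304.04008 — 3 statements merged into one kernel-verified Lean document; each statement's English description precedes it below -/
import Mathlib

section
/- Let Y be a real random variable with P(Y > t) ~ (C/2)·t^{-α} and P(Y < -t) ~ (C/2)·t^{-α} as t → +∞, for C > 0, α > 0. Let τ : ℝ → ℝ be continuous, strictly increasing for z > a (some a > 0), with τ(z)/z^γ → 1 as z → +∞, and suppose there exist b > 0, β ∈ [0, γ) and y₀ < 0 with |τ(y)| ≤ b·|y|^β for all y ≤ y₀. Then P(|τ(Y)| > t) ~ (C/2)·t^{-α/γ} as t → +∞. -/
open MeasureTheory Filter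


private lemma rpow_inv_lt {u v e : ℝ} (hu : 0 < u) (hv : 0 ≤ v) (he : 0 < e)
    (h : u < v ^ e) : u ^ (1/e) < v := by
  have h2 := Real.rpow_lt_rpow hu.le h (one_div_pos.mpr he)
  rwa [← Real.rpow_mul hv, mul_one_div, div_self he.ne', Real.rpow_one] at h2

private lemma rpow_lt_of_inv_lt {u v e : ℝ} (hu : 0 ≤ u) (he : 0 < e)
    (h : u ^ (1/e) < v) : u < v ^ e := by
  have h2 := Real.rpow_lt_rpow (Real.rpow_nonneg hu _) h he
  rwa [← Real.rpow_mul hu, one_div_mul_cancel he.ne', Real.rpow_one] at h2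

private lemma aux_ratio (P : ℝ → ℝ) (C α : ℝ) (hC : 0 < C)
    (hP : Tendsto (fun s => P s / (C/2 * s ^ (-α))) atTop (nhds 1))
    (d g : ℝ) (hd : 0 < d) (hg : 0 < g) :
    Tendsto (fun t => P ((t/d) ^ (1/g)) / (C/2 * t ^ (-(α/g)))) atTop (nhds (d ^ (α/g))) := by
  have hs : Tendsto (fun t : ℝ => (t/d) ^ (1/g)) atTop atTop :=
    (tendsto_rpow_atTop (by positivity)).comp (tendsto_id.atTop_div_const hd)
  have h1 := hP.comp hs
  have h2 := h1.mul_const (d ^ (α/g))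
  rw [one_mul] at h2
  refine Tendsto.congr' ?_ h2
  filter_upwards [eventually_gt_atTop 0] with t ht
  have htd : (0:ℝ) < t/d := div_pos ht hd
  have key : ((t/d) ^ (1/g) : ℝ) ^ (-α) = t ^ (-(α/g)) * d ^ (α/g) := by
    rw [← Real.rpow_mul htd.le, show (1/g) * (-α) = -(α/g) by ring,
        Real.div_rpow ht.le hd.le, Real.rpow_neg hd.le, div_eq_mul_inv, inv_inv]
  show P ((t/d) ^ (1/g)) / (C/2 * ((t/d) ^ (1/g)) ^ (-α)) * d ^ (α/g)
      = P ((t/d) ^ (1/g)) / (C/2 * t ^ (-(α/g)))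
  rw [key]
  have h3 : (C/2 * t ^ (-(α/g))) ≠ 0 := by positivity
  have h4 : (d:ℝ) ^ (α/g) ≠ 0 := by positivity
  field_simp

private lemma aux_small (P : ℝ → ℝ) (C α : ℝ) (hC : 0 < C)
    (hP : Tendsto (fun s => P s / (C/2 * s ^ (-α))) atTop (nhds 1))
    (d g p : ℝ) (hd : 0 < d) (hg : 0 < g) (hp : p < α/g) :
    Tendsto (fun t => P ((t/d) ^ (1/g)) / (C/2 * t ^ (-p))) atTop (nhds 0) := by
  have h1 := (aux_ratio P C α hC hP d g hd hg).mul (tendsto_rpow_neg_atTop (sub_pos.mpr hp))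
  rw [mul_zero] at h1
  refine Tendsto.congr' ?_ h1
  filter_upwards [eventually_gt_atTop 0] with t ht
  have hsub : (t : ℝ) ^ (-(α/g - p)) = t ^ (-(α/g)) / t ^ (-p) := by
    rw [show -(α/g - p) = (-(α/g)) - (-p) by ring, Real.rpow_sub ht]
  show P ((t/d) ^ (1/g)) / (C/2 * t ^ (-(α/g))) * t ^ (-(α/g - p))
      = P ((t/d) ^ (1/g)) / (C/2 * t ^ (-p))
  rw [hsub]
  have h2 : (t : ℝ) ^ (-(α/g)) ≠ 0 := by positivity
  have h3 : (t : ℝ) ^ (-p) ≠ 0 := by positivity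
  have h4 : (C:ℝ)/2 ≠ 0 := by positivity
  field_simp


set_option maxHeartbeats 1000000 in

/-- Tail behaviour of `τ(Y)` for `τ ∈ E₃`: if `Y` has symmetric power tails of index `α`,
`τ` is continuous, strictly increasing for `z > a`, `τ(z)/z^γ → 1` at `+∞`, and `τ` is
dominated by `b|y|^β` with `β < γ` on `(-∞, y₀]`, then `P(|τ(Y)| > t) ~ (C/2) t^{-α/γ}`. -/
theorem stmt5 {Ω : Type*} [MeasurableSpace Ω] (ℙ : Measure Ω) [IsProbabilityMeasure ℙ]
    (Y : Ω → ℝ) (hY : Measurable Y) (C α : ℝ) (hC : 0 < C) (hα : 0 < α)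
    (hup : Tendsto (fun t => (ℙ {ω | t < Y ω}).toReal / (C/2 * t ^ (-α))) atTop (nhds 1))
    (hlow : Tendsto (fun t => (ℙ {ω | Y ω < -t}).toReal / (C/2 * t ^ (-α))) atTop (nhds 1))
    (τ : ℝ → ℝ) (a γ b β y₀ : ℝ) (ha : 0 < a) (hγ : 0 < γ) (hτc : Continuous τ)
    (hmono : StrictMonoOn τ (Set.Ioi a))
    (hτtop : Tendsto (fun z => τ z / z ^ γ) atTop (nhds 1))
    (hb : 0 < b) (hβ0 : 0 ≤ β) (hβγ : β < γ) (hy₀ : y₀ < 0)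
    (hdom : ∀ y : ℝ, y ≤ y₀ → |τ y| ≤ b * |y| ^ β) :
    Tendsto (fun t => (ℙ {ω | t < |τ (Y ω)|}).toReal / (C/2 * t ^ (-(α/γ)))) atTop (nhds 1) := by
  -- modified exponent on the negative side
  set β' : ℝ := (β + γ) / 2 with hβ'def
  have hβ'0 : 0 < β' := by simp only [hβ'def]; linarith
  have hββ' : β ≤ β' := by simp only [hβ'def]; linarith
  have hβ'γ : β' < γ := by simp only [hβ'def]; linarith
  -- extended domination on the far negative axis
  set y₁ : ℝ := min y₀ (-1) with hy₁def
  have hy₁neg : y₁ ≤ -1 := min_le_right _ _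
  have hdom' : ∀ y : ℝ, y ≤ y₁ → |τ y| ≤ b * |y| ^ β' := by
    intro y hy
    have hy0 : y ≤ y₀ := le_trans hy (min_le_left _ _)
    have hy1 : y ≤ -1 := le_trans hy hy₁neg
    have habs : (1:ℝ) ≤ |y| := by rw [abs_of_neg (by linarith)]; linarith
    calc |τ y| ≤ b * |y| ^ β := hdom y hy0
      _ ≤ b * |y| ^ β' :=
        mul_le_mul_of_nonneg_left (Real.rpow_le_rpow_of_exponent_le habs hββ') hb.le
  rw [Metric.tendsto_nhds]
  intro δ hδ
  -- choose ε so that (1±ε)^(α/γ) is within δ/4 of 1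
  have hcont : ContinuousAt (fun x : ℝ => x ^ (α/γ)) 1 :=
    Real.continuousAt_rpow_const 1 _ (Or.inl one_ne_zero)
  have h1' : Tendsto (fun x : ℝ => x ^ (α/γ)) (nhds 1) (nhds 1) := by
    simpa [Real.one_rpow] using hcont.tendsto
  have hevp : ∀ᶠ x : ℝ in nhds 1, |x ^ (α/γ) - 1| < δ/4 := by
    have := Metric.tendsto_nhds.mp h1' (δ/4) (by linarith)
    simpa [Real.dist_eq] using this
  obtain ⟨r, hr, hball⟩ := Metric.eventually_nhds_iff.mp hevp
  set ε : ℝ := min (r/2) (1/2) with hεdef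
  have hε0 : 0 < ε := lt_min (by linarith) (by norm_num)
  have hε1 : ε < 1 := lt_of_le_of_lt (min_le_right _ _) (by norm_num)
  have hεr : ε < r := lt_of_le_of_lt (min_le_left _ _) (by linarith)
  have h1ε : (0:ℝ) < 1 + ε := by linarith
  have h1ε' : (0:ℝ) < 1 - ε := by linarith
  have hL1 : |(1+ε) ^ (α/γ) - 1| < δ/4 := by
    apply hball
    rw [Real.dist_eq]
    rw [show (1:ℝ) + ε - 1 = ε by ring, abs_of_pos hε0]
    exact hεr
  have hL2 : |(1-ε) ^ (α/γ) - 1| < δ/4 := by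
    apply hball
    rw [Real.dist_eq]
    rw [show (1:ℝ) - ε - 1 = -ε by ring, abs_neg, abs_of_pos hε0]
    exact hεr
  rw [abs_sub_lt_iff] at hL1 hL2
  -- threshold Z' beyond which τ is pinched between (1±ε) z^γ
  have hevτ : ∀ᶠ z : ℝ in atTop, |τ z / z ^ γ - 1| < ε := by
    have := Metric.tendsto_nhds.mp hτtop ε hε0
    simpa [Real.dist_eq] using this
  obtain ⟨Z, hZ⟩ := eventually_atTop.mp hevτ
  set Z' : ℝ := max Z (max a 1) with hZ'def
  have hZ'1 : (1:ℝ) ≤ Z' := le_max_of_le_right (le_max_right _ _)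
  have hτbound : ∀ z, Z' ≤ z → (1-ε) * z ^ γ < τ z ∧ τ z < (1+ε) * z ^ γ := by
    intro z hz
    have hz1 : (1:ℝ) ≤ z := le_trans hZ'1 hz
    have hzpos : (0:ℝ) < z := by linarith
    have hzg : (0:ℝ) < z ^ γ := Real.rpow_pos_of_pos hzpos _
    have h := hZ z (le_trans (le_max_left _ _) hz)
    rw [abs_sub_lt_iff] at h
    constructor
    · have h2 : 1 - ε < τ z / z ^ γ := by linarith [h.2]
      calc (1-ε) * z ^ γ < (τ z / z ^ γ) * z ^ γ := by
            exact mul_lt_mul_of_pos_right h2 hzg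
        _ = τ z := div_mul_cancel₀ _ hzg.ne'
    · have h2 : τ z / z ^ γ < 1 + ε := by linarith [h.1]
      calc τ z = (τ z / z ^ γ) * z ^ γ := (div_mul_cancel₀ _ hzg.ne').symm
        _ < (1+ε) * z ^ γ := mul_lt_mul_of_pos_right h2 hzg
  -- bound on the compact middle interval
  obtain ⟨M0, hM0⟩ :=
    (isCompact_Icc : IsCompact (Set.Icc y₁ Z')).exists_bound_of_continuousOn hτc.continuousOn
  -- upper inclusion
  have hup_incl : ∀ t : ℝ, 0 < t → M0 < t →
      {ω | t < |τ (Y ω)|} ⊆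
        {ω | (t/(1+ε)) ^ (1/γ) < Y ω} ∪ {ω | Y ω < -((t/b) ^ (1/β'))} := by
    intro t ht htM ω hω
    simp only [Set.mem_setOf_eq] at hω
    rcases le_or_gt (Y ω) y₁ with hc | hc
    · right
      have h1 : t < b * |Y ω| ^ β' := lt_of_lt_of_le hω (hdom' _ hc)
      have h2 : t / b < |Y ω| ^ β' := (div_lt_iff₀' hb).mpr h1
      have h3 : (t/b) ^ (1/β') < |Y ω| :=
        rpow_inv_lt (div_pos ht hb) (abs_nonneg _) hβ'0 h2
      have hyneg : Y ω < 0 := lt_of_le_of_lt hc (by linarith)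
      rw [abs_of_neg hyneg] at h3
      show Y ω < -((t/b) ^ (1/β'))
      linarith
    · rcases le_or_gt (Y ω) Z' with hc2 | hc2
      · exfalso
        have := hM0 (Y ω) ⟨hc.le, hc2⟩
        rw [Real.norm_eq_abs] at this
        linarith
      · left
        have hτb := hτbound (Y ω) hc2.le
        have hZ'pos : (0:ℝ) < Z' := by linarith
        have hypos : 0 < Y ω := lt_trans hZ'pos hc2
        have hγp : (0:ℝ) < (Y ω) ^ γ := Real.rpow_pos_of_pos hypos _
        have hτpos : 0 < τ (Y ω) := lt_trans (mul_pos h1ε' hγp) hτb.1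
        rw [abs_of_pos hτpos] at hω
        have h1 : t / (1+ε) < (Y ω) ^ γ := by
          rw [div_lt_iff₀ h1ε, mul_comm]
          exact lt_trans hω hτb.2
        exact rpow_inv_lt (div_pos ht h1ε) hypos.le hγ h1
  -- lower inclusion
  have hlow_incl : ∀ t : ℝ, 0 < t → Z' ≤ (t/(1-ε)) ^ (1/γ) →
      {ω | (t/(1-ε)) ^ (1/γ) < Y ω} ⊆ {ω | t < |τ (Y ω)|} := by
    intro t ht hts ω hω
    simp only [Set.mem_setOf_eq] at hω ⊢
    have h1 : t / (1-ε) < (Y ω) ^ γ :=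
      rpow_lt_of_inv_lt (le_of_lt (div_pos ht h1ε')) hγ hω
    have hτb := (hτbound (Y ω) (le_trans hts hω.le)).1
    have key : (1-ε) * (t/(1-ε)) = t := by field_simp
    have h2 : t < τ (Y ω) := by
      have hmul := mul_lt_mul_of_pos_left h1 h1ε'
      rw [key] at hmul
      exact lt_trans hmul hτb
    calc t < τ (Y ω) := h2
      _ ≤ |τ (Y ω)| := le_abs_self _
  -- main tail asymptotics
  have hA : Tendsto (fun t => (ℙ {ω | (t/(1+ε)) ^ (1/γ) < Y ω}).toReal /
      (C/2 * t ^ (-(α/γ)))) atTop (nhds ((1+ε) ^ (α/γ))) :=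
    aux_ratio (fun s => (ℙ {ω | s < Y ω}).toReal) C α hC hup (1+ε) γ h1ε hγ
  have hA2 : Tendsto (fun t => (ℙ {ω | (t/(1-ε)) ^ (1/γ) < Y ω}).toReal /
      (C/2 * t ^ (-(α/γ)))) atTop (nhds ((1-ε) ^ (α/γ))) :=
    aux_ratio (fun s => (ℙ {ω | s < Y ω}).toReal) C α hC hup (1-ε) γ h1ε' hγ
  have hB : Tendsto (fun t => (ℙ {ω | Y ω < -((t/b) ^ (1/β'))}).toReal /
      (C/2 * t ^ (-(α/γ)))) atTop (nhds 0) :=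
    aux_small (fun s => (ℙ {ω | Y ω < -s}).toReal) C α hC hlow b β' (α/γ) hb hβ'0
      (div_lt_div_of_pos_left hα hβ'0 hβ'γ)
  -- eventual numeric bounds
  have eA : ∀ᶠ t : ℝ in atTop, (ℙ {ω | (t/(1+ε)) ^ (1/γ) < Y ω}).toReal /
      (C/2 * t ^ (-(α/γ))) < (1+ε) ^ (α/γ) + δ/4 := by
    filter_upwards [Metric.tendsto_nhds.mp hA (δ/4) (by linarith)] with t hh
    rw [Real.dist_eq, abs_sub_lt_iff] at hh
    linarith [hh.1]
  have eA2 : ∀ᶠ t : ℝ in atTop, (1-ε) ^ (α/γ) - δ/4 <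
      (ℙ {ω | (t/(1-ε)) ^ (1/γ) < Y ω}).toReal / (C/2 * t ^ (-(α/γ))) := by
    filter_upwards [Metric.tendsto_nhds.mp hA2 (δ/4) (by linarith)] with t hh
    rw [Real.dist_eq, abs_sub_lt_iff] at hh
    linarith [hh.2]
  have eB : ∀ᶠ t : ℝ in atTop, (ℙ {ω | Y ω < -((t/b) ^ (1/β'))}).toReal /
      (C/2 * t ^ (-(α/γ))) < δ/4 := by
    filter_upwards [Metric.tendsto_nhds.mp hB (δ/4) (by linarith)] with t hh
    rw [Real.dist_eq, sub_zero] at hh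
    exact lt_of_abs_lt hh
  have hsT : Tendsto (fun t : ℝ => (t/(1-ε)) ^ (1/γ)) atTop atTop :=
    (tendsto_rpow_atTop (by positivity)).comp (tendsto_id.atTop_div_const h1ε')
  filter_upwards [eventually_gt_atTop 0, eventually_gt_atTop M0, eA, eA2, eB,
    hsT.eventually_ge_atTop Z'] with t ht htM heA heA2 heB hts
  have hD : (0:ℝ) < C/2 * t ^ (-(α/γ)) := by positivity
  -- upper probability estimate
  have hPup : (ℙ {ω | t < |τ (Y ω)|}).toReal ≤
      (ℙ {ω | (t/(1+ε)) ^ (1/γ) < Y ω}).toReal +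
      (ℙ {ω | Y ω < -((t/b) ^ (1/β'))}).toReal := by
    have hm : ℙ {ω | t < |τ (Y ω)|} ≤
        ℙ {ω | (t/(1+ε)) ^ (1/γ) < Y ω} + ℙ {ω | Y ω < -((t/b) ^ (1/β'))} :=
      (measure_mono (hup_incl t ht htM)).trans (measure_union_le _ _)
    have := ENNReal.toReal_mono
      (ENNReal.add_ne_top.mpr ⟨measure_ne_top _ _, measure_ne_top _ _⟩) hm
    rwa [ENNReal.toReal_add (measure_ne_top _ _) (measure_ne_top _ _)] at this
  have hPlow : (ℙ {ω | (t/(1-ε)) ^ (1/γ) < Y ω}).toReal ≤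
      (ℙ {ω | t < |τ (Y ω)|}).toReal :=
    ENNReal.toReal_mono (measure_ne_top _ _) (measure_mono (hlow_incl t ht hts))
  rw [Real.dist_eq, abs_sub_lt_iff]
  have hupr : (ℙ {ω | t < |τ (Y ω)|}).toReal / (C/2 * t ^ (-(α/γ))) ≤
      (ℙ {ω | (t/(1+ε)) ^ (1/γ) < Y ω}).toReal / (C/2 * t ^ (-(α/γ))) +
      (ℙ {ω | Y ω < -((t/b) ^ (1/β'))}).toReal / (C/2 * t ^ (-(α/γ))) := by
    rw [← add_div]
    exact div_le_div_of_nonneg_right hPup hD.le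
  have hlowr : (ℙ {ω | (t/(1-ε)) ^ (1/γ) < Y ω}).toReal / (C/2 * t ^ (-(α/γ))) ≤
      (ℙ {ω | t < |τ (Y ω)|}).toReal / (C/2 * t ^ (-(α/γ))) :=
    div_le_div_of_nonneg_right hPlow hD.le
  constructor
  · linarith [hL1.1]
  · linarith [hL2.2]
end

section
/- Let X and Y be independent nonnegative random variables with P(X > t) ~ c_x·t^{-α} and P(Y > t) ~ c_y·t^{-α} as t → +∞, for constants c_x, c_y > 0 and α > 0. Then P(X·Y > t) ~ α·c_x·c_y·t^{-α}·log t as t → +∞. -/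
open MeasureTheory Filter Set


lemma stmt8_tail_ev (μ : Measure ℝ) (c α δ : ℝ) (hδ : 0 < δ) (hc : 0 < c)
    (h : Tendsto (fun t => (μ (Ioi t)).toReal / (c * t ^ (-α))) atTop (nhds 1)) :
    ∀ᶠ s in atTop, (1 - δ) * (c * s ^ (-α)) ≤ (μ (Ioi s)).toReal ∧
      (μ (Ioi s)).toReal ≤ (1 + δ) * (c * s ^ (-α)) := by
  have h1 := Metric.tendsto_nhds.mp h δ hδ
  filter_upwards [h1, eventually_gt_atTop 0] with s hs hs0
  have hd : 0 < c * s ^ (-α) := mul_pos hc (Real.rpow_pos_of_pos hs0 _)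
  rw [Real.dist_eq, abs_sub_lt_iff] at hs
  constructor
  · have := (lt_div_iff₀ hd).mp
      (by linarith [hs.2] : (1 - δ : ℝ) < (μ (Ioi s)).toReal / (c * s ^ (-α)))
    linarith
  · have := (div_lt_iff₀ hd).mp
      (by linarith [hs.1] : (μ (Ioi s)).toReal / (c * s ^ (-α)) < 1 + δ)
    linarith

lemma stmt8_trunc_eq (μ : Measure ℝ) [IsProbabilityMeasure μ] {α B : ℝ} (hα : 0 < α)
    (hB : 0 < B) :
    ∫⁻ x in Ioc 0 B, ENNReal.ofReal (x ^ α) ∂μ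
      = ∫⁻ t in Ioi 0, μ (Ioc t B) * ENNReal.ofReal (α * t ^ (α - 1)) := by
  have g_intble : ∀ t > 0, IntervalIntegrable (fun s => α * s ^ (α - 1)) volume 0 t := by
    intro t _
    exact (intervalIntegral.intervalIntegrable_rpow' (by linarith)).const_mul α
  have f_nn : 0 ≤ᵐ[μ.restrict (Ioc 0 B)] (id : ℝ → ℝ) := by
    filter_upwards [ae_restrict_mem measurableSet_Ioc] with x hx
    exact hx.1.le
  have g_nn : ∀ᵐ t ∂volume.restrict (Ioi 0), 0 ≤ α * t ^ (α - 1) := by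
    filter_upwards [ae_restrict_mem measurableSet_Ioi] with t ht
    exact mul_nonneg hα.le (Real.rpow_nonneg (le_of_lt ht) _)
  have key := lintegral_comp_eq_lintegral_meas_lt_mul (μ.restrict (Ioc 0 B))
    f_nn measurable_id.aemeasurable g_intble g_nn
  have lhs_eq : ∫⁻ x in Ioc 0 B, ENNReal.ofReal (x ^ α) ∂μ
      = ∫⁻ x, ENNReal.ofReal (∫ t in (0)..(id x), α * t ^ (α - 1)) ∂(μ.restrict (Ioc 0 B)) := by
    refine lintegral_congr_ae ?_
    filter_upwards [ae_restrict_mem measurableSet_Ioc] with x hx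
    rw [intervalIntegral.integral_const_mul, integral_rpow (Or.inl (by linarith))]
    rw [Real.zero_rpow (by linarith : α - 1 + 1 ≠ 0)]
    rw [sub_add_cancel]
    congr 1
    field_simp
    simp
  rw [lhs_eq, key]
  refine setLIntegral_congr_fun measurableSet_Ioi ?_
  intro t ht
  beta_reduce
  congr 1
  have hset : {a : ℝ | t < id a} = Ioi t := rfl
  rw [hset, Measure.restrict_apply measurableSet_Ioi]
  congr 1
  ext x
  simp only [mem_setOf_eq, mem_inter_iff, mem_Ioi, mem_Ioc]
  exact ⟨fun ⟨h1, _, h3⟩ => ⟨h1, h3⟩, fun ⟨h1, h2⟩ => ⟨h1, lt_trans ht h1, h2⟩⟩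

-- helper: lintegral of ofReal over a set equals ofReal of integral
lemma stmt8_lint_ofReal {s : Set ℝ} (hs : MeasurableSet s) {g : ℝ → ℝ}
    (hint : IntegrableOn g s) (hnn : ∀ x ∈ s, 0 ≤ g x) :
    ∫⁻ t in s, ENNReal.ofReal (g t) = ENNReal.ofReal (∫ t in s, g t) := by
  rw [ofReal_integral_eq_lintegral_ofReal hint]
  filter_upwards [ae_restrict_mem hs] with x hx
  exact hnn x hx

lemma stmt8_pow_integral {α A : ℝ} (hα : 0 < α) (hA : 0 ≤ A) :
    ∫ t in Ioc 0 A, α * t ^ (α - 1) = A ^ α := by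
  rw [← intervalIntegral.integral_of_le hA]
  rw [intervalIntegral.integral_const_mul, integral_rpow (Or.inl (by linarith))]
  rw [Real.zero_rpow (by linarith : α - 1 + 1 ≠ 0), sub_add_cancel]
  field_simp
  simp

lemma stmt8_pow_integrable {α A : ℝ} (hα : 0 < α) (hA : 0 ≤ A) :
    IntegrableOn (fun t => α * t ^ (α - 1)) (Ioc 0 A) := by
  have := (intervalIntegral.intervalIntegrable_rpow' (a := 0) (b := A)
    (by linarith : (-1:ℝ) < α - 1)).const_mul α
  rw [intervalIntegrable_iff_integrableOn_Ioc_of_le hA] at this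
  exact this

lemma stmt8_inv_integral {A B : ℝ} (hA : 0 < A) (hAB : A ≤ B) :
    ∫ t in Ioc A B, t⁻¹ = Real.log B - Real.log A := by
  rw [← intervalIntegral.integral_of_le hAB, integral_inv]
  · rw [Real.log_div (by linarith) (by linarith)]
  · intro h
    rw [uIcc_of_le hAB] at h
    exact absurd h.1 (not_le.mpr hA)

lemma stmt8_inv_integrable {A B : ℝ} (hA : 0 < A) (hAB : A ≤ B) :
    IntegrableOn (fun t : ℝ => t⁻¹) (Ioc A B) := by
  have : IntervalIntegrable (fun t : ℝ => t⁻¹) volume A B := by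
    apply intervalIntegral.intervalIntegrable_inv (f := fun x : ℝ => x)
    · intro x hx
      rw [uIcc_of_le hAB] at hx
      exact ne_of_gt (lt_of_lt_of_le hA hx.1)
    · exact continuousOn_id
  rw [intervalIntegrable_iff_integrableOn_Ioc_of_le hAB] at this
  exact this



lemma stmt8_trunc_upper (μ : Measure ℝ) [IsProbabilityMeasure μ] {c α δ A B : ℝ}
    (hα : 0 < α) (hc : 0 < c) (hδ : 0 < δ) (hA : 1 ≤ A) (hB : A ≤ B)
    (hbd : ∀ s, A ≤ s → (μ (Ioi s)).toReal ≤ (1 + δ) * (c * s ^ (-α))) :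
    ∫⁻ x in Ioc 0 B, ENNReal.ofReal (x ^ α) ∂μ
      ≤ ENNReal.ofReal (A ^ α + α * ((1 + δ) * c) * Real.log B) := by
  have hA0 : (0:ℝ) < A := lt_of_lt_of_le zero_lt_one hA
  have hB0 : (0:ℝ) < B := lt_of_lt_of_le hA0 hB
  rw [stmt8_trunc_eq μ hα hB0]
  rw [← Ioc_union_Ioi_eq_Ioi hA0.le, lintegral_union measurableSet_Ioi Ioc_disjoint_Ioi_same]
  have h1 : ∫⁻ t in Ioc 0 A, μ (Ioc t B) * ENNReal.ofReal (α * t ^ (α - 1))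
      ≤ ENNReal.ofReal (A ^ α) :=
    calc ∫⁻ t in Ioc 0 A, μ (Ioc t B) * ENNReal.ofReal (α * t ^ (α - 1))
        ≤ ∫⁻ t in Ioc 0 A, ENNReal.ofReal (α * t ^ (α - 1)) := by
          refine lintegral_mono_ae (Eventually.of_forall fun t => ?_)
          calc μ (Ioc t B) * ENNReal.ofReal (α * t ^ (α - 1))
              ≤ 1 * ENNReal.ofReal (α * t ^ (α - 1)) := mul_le_mul_left prob_le_one _
            _ = _ := one_mul _
      _ = ENNReal.ofReal (∫ t in Ioc 0 A, α * t ^ (α - 1)) :=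
          stmt8_lint_ofReal measurableSet_Ioc (stmt8_pow_integrable hα hA0.le)
            (fun x hx => mul_nonneg hα.le (Real.rpow_nonneg hx.1.le _))
      _ = ENNReal.ofReal (A ^ α) := by rw [stmt8_pow_integral hα hA0.le]
  have h2 : ∫⁻ t in Ioi A, μ (Ioc t B) * ENNReal.ofReal (α * t ^ (α - 1))
      ≤ ENNReal.ofReal (α * ((1 + δ) * c) * (Real.log B - Real.log A)) := by
    rw [← Ioc_union_Ioi_eq_Ioi hB, lintegral_union measurableSet_Ioi Ioc_disjoint_Ioi_same]
    have h3 : ∫⁻ t in Ioi B, μ (Ioc t B) * ENNReal.ofReal (α * t ^ (α - 1)) = 0 := by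
      rw [setLIntegral_congr_fun measurableSet_Ioi
        (fun t (ht : t ∈ Ioi B) => ?_), lintegral_zero]
      rw [Ioc_eq_empty (not_lt.mpr (le_of_lt ht)), measure_empty, zero_mul]
    have h4 : ∫⁻ t in Ioc A B, μ (Ioc t B) * ENNReal.ofReal (α * t ^ (α - 1))
        ≤ ENNReal.ofReal (α * ((1 + δ) * c) * (Real.log B - Real.log A)) := by
      have step : ∀ t ∈ Ioc A B, μ (Ioc t B) * ENNReal.ofReal (α * t ^ (α - 1))
          ≤ ENNReal.ofReal (α * ((1 + δ) * c) * t⁻¹) := by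
        intro t ht
        have ht0 : (0:ℝ) < t := lt_of_lt_of_le hA0 ht.1.le
        have hmeas : μ (Ioc t B) ≤ ENNReal.ofReal ((1 + δ) * (c * t ^ (-α))) := by
          calc μ (Ioc t B) ≤ μ (Ioi t) := measure_mono Ioc_subset_Ioi_self
            _ = ENNReal.ofReal ((μ (Ioi t)).toReal) :=
                (ENNReal.ofReal_toReal (measure_ne_top μ _)).symm
            _ ≤ _ := ENNReal.ofReal_le_ofReal (hbd t ht.1.le)
        calc μ (Ioc t B) * ENNReal.ofReal (α * t ^ (α - 1))
            ≤ ENNReal.ofReal ((1 + δ) * (c * t ^ (-α))) * ENNReal.ofReal (α * t ^ (α - 1)) :=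
              mul_le_mul_left hmeas _
          _ = ENNReal.ofReal ((1 + δ) * (c * t ^ (-α)) * (α * t ^ (α - 1))) :=
              (ENNReal.ofReal_mul (by positivity)).symm
          _ = ENNReal.ofReal (α * ((1 + δ) * c) * t⁻¹) := by
              congr 1
              have he : t ^ (-α) * t ^ (α - 1) = t⁻¹ := by
                rw [← Real.rpow_add ht0]
                have : -α + (α - 1) = -1 := by ring
                rw [this, Real.rpow_neg_one]
              rw [show (1 + δ) * (c * t ^ (-α)) * (α * t ^ (α - 1))
                  = α * ((1 + δ) * c) * (t ^ (-α) * t ^ (α - 1)) from by ring, he]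
      calc ∫⁻ t in Ioc A B, μ (Ioc t B) * ENNReal.ofReal (α * t ^ (α - 1))
          ≤ ∫⁻ t in Ioc A B, ENNReal.ofReal (α * ((1 + δ) * c) * t⁻¹) := by
            refine lintegral_mono_ae ?_
            filter_upwards [ae_restrict_mem measurableSet_Ioc] with t ht
            exact step t ht
        _ = ENNReal.ofReal (∫ t in Ioc A B, α * ((1 + δ) * c) * t⁻¹) := by
            refine stmt8_lint_ofReal measurableSet_Ioc ?_ ?_
            · exact (stmt8_inv_integrable hA0 hB).const_mul _
            · intro x hx
              have : (0:ℝ) < x := lt_of_lt_of_le hA0 hx.1.le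
              positivity
        _ = ENNReal.ofReal (α * ((1 + δ) * c) * (Real.log B - Real.log A)) := by
            rw [MeasureTheory.integral_const_mul, stmt8_inv_integral hA0 hB]
    rw [h3, add_zero]
    exact h4
  calc _ ≤ ENNReal.ofReal (A ^ α)
        + ENNReal.ofReal (α * ((1 + δ) * c) * (Real.log B - Real.log A)) := add_le_add h1 h2
    _ = ENNReal.ofReal (A ^ α + α * ((1 + δ) * c) * (Real.log B - Real.log A)) := by
        rw [← ENNReal.ofReal_add (by positivity)
          (mul_nonneg (by positivity)
            (sub_nonneg.mpr (Real.log_le_log hA0 hB)))]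
    _ ≤ _ := by
        apply ENNReal.ofReal_le_ofReal
        have hlogA : 0 ≤ Real.log A := Real.log_nonneg hA
        nlinarith [mul_nonneg (mul_nonneg hα.le (by positivity : (0:ℝ) ≤ (1+δ)*c)) hlogA]

lemma stmt8_ofReal_max (x : ℝ) : ENNReal.ofReal (max x 0) = ENNReal.ofReal x := by
  rcases le_total x 0 with h | h
  · rw [max_eq_right h, ENNReal.ofReal_zero, ENNReal.ofReal_eq_zero.mpr h]
  · rw [max_eq_left h]

lemma stmt8_ofReal_int_le {s : Set ℝ} (hs : MeasurableSet s) {g : ℝ → ℝ}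
    (hint : IntegrableOn g s) :
    ENNReal.ofReal (∫ t in s, g t) ≤ ∫⁻ t in s, ENNReal.ofReal (g t) := by
  calc ENNReal.ofReal (∫ t in s, g t)
      ≤ ENNReal.ofReal (∫ t in s, max (g t) 0) := by
        apply ENNReal.ofReal_le_ofReal
        exact integral_mono hint hint.pos_part (fun t => le_max_left _ _)
    _ = ∫⁻ t in s, ENNReal.ofReal (max (g t) 0) :=
        ofReal_integral_eq_lintegral_ofReal hint.pos_part
          (Eventually.of_forall fun t => le_max_right _ _)
    _ = _ := by simp_rw [stmt8_ofReal_max]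

lemma stmt8_trunc_lower (μ : Measure ℝ) [IsProbabilityMeasure μ] {c α δ A B : ℝ}
    (hα : 0 < α) (hc : 0 < c) (hδ : 0 < δ) (hA : 1 ≤ A) (hB : A ≤ B)
    (hlo : ∀ s, A ≤ s → (1 - δ) * (c * s ^ (-α)) ≤ (μ (Ioi s)).toReal)
    (hup : ∀ s, A ≤ s → (μ (Ioi s)).toReal ≤ (1 + δ) * (c * s ^ (-α))) :
    ENNReal.ofReal (α * ((1 - δ) * c) * (Real.log B - Real.log A) - (1 + δ) * c)
      ≤ ∫⁻ x in Ioc 0 B, ENNReal.ofReal (x ^ α) ∂μ := by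
  have hA0 : (0:ℝ) < A := lt_of_lt_of_le zero_lt_one hA
  have hB0 : (0:ℝ) < B := lt_of_lt_of_le hA0 hB
  rw [stmt8_trunc_eq μ hα hB0]
  set g : ℝ → ℝ := fun t =>
    α * ((1 - δ) * c) * t⁻¹ - (1 + δ) * (c * B ^ (-α)) * (α * t ^ (α - 1)) with hg
  have hgint : IntegrableOn g (Ioc A B) := by
    apply Integrable.sub
    · exact (stmt8_inv_integrable hA0 hB).const_mul _
    · exact ((stmt8_pow_integrable hα hB0.le).mono_set (Ioc_subset_Ioc_left hA0.le)).const_mul _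
  have hgval : ∫ t in Ioc A B, g t
      = α * ((1 - δ) * c) * (Real.log B - Real.log A)
        - (1 + δ) * (c * B ^ (-α)) * (B ^ α - A ^ α) := by
    rw [integral_sub ((stmt8_inv_integrable hA0 hB).const_mul _)
      (((stmt8_pow_integrable hα hB0.le).mono_set (Ioc_subset_Ioc_left hA0.le)).const_mul _)]
    rw [MeasureTheory.integral_const_mul, MeasureTheory.integral_const_mul,
      stmt8_inv_integral hA0 hB]
    congr 1
    rw [← intervalIntegral.integral_of_le hB, intervalIntegral.integral_const_mul,
      integral_rpow (Or.inl (by linarith : (-1:ℝ) < α - 1)), sub_add_cancel]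
    field_simp
  have key : ∫⁻ t in Ioc A B, ENNReal.ofReal (g t)
      ≤ ∫⁻ t in Ioc A B, μ (Ioc t B) * ENNReal.ofReal (α * t ^ (α - 1)) := by
    refine lintegral_mono_ae ?_
    filter_upwards [ae_restrict_mem measurableSet_Ioc] with t ht
    have ht0 : (0:ℝ) < t := lt_of_lt_of_le hA0 ht.1.le
    have he : t ^ (-α) * t ^ (α - 1) = t⁻¹ := by
      rw [← Real.rpow_add ht0]
      have : -α + (α - 1) = -1 := by ring
      rw [this, Real.rpow_neg_one]
    have hgt : g t = ((1 - δ) * (c * t ^ (-α)) - (1 + δ) * (c * B ^ (-α)))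
        * (α * t ^ (α - 1)) := by
      rw [hg]; simp only []
      rw [← he]; ring
    have hsplit : (μ (Ioi t)).toReal = (μ (Ioc t B)).toReal + (μ (Ioi B)).toReal := by
      rw [← ENNReal.toReal_add (measure_ne_top μ _) (measure_ne_top μ _),
        ← measure_union Ioc_disjoint_Ioi_same measurableSet_Ioi,
        Ioc_union_Ioi_eq_Ioi ht.2]
    have hmm : (1 - δ) * (c * t ^ (-α)) - (1 + δ) * (c * B ^ (-α))
        ≤ (μ (Ioc t B)).toReal := by
      have h1 := hlo t ht.1.le
      have h2 := hup B hB
      linarith [hsplit]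
    calc ENNReal.ofReal (g t)
        = ENNReal.ofReal ((1 - δ) * (c * t ^ (-α)) - (1 + δ) * (c * B ^ (-α)))
          * ENNReal.ofReal (α * t ^ (α - 1)) := by
          rw [hgt, ENNReal.ofReal_mul' (by positivity)]
      _ ≤ μ (Ioc t B) * ENNReal.ofReal (α * t ^ (α - 1)) := by
          apply mul_le_mul_left
          calc ENNReal.ofReal ((1 - δ) * (c * t ^ (-α)) - (1 + δ) * (c * B ^ (-α)))
              ≤ ENNReal.ofReal ((μ (Ioc t B)).toReal) := ENNReal.ofReal_le_ofReal hmm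
            _ = μ (Ioc t B) := ENNReal.ofReal_toReal (measure_ne_top μ _)
  calc ENNReal.ofReal (α * ((1 - δ) * c) * (Real.log B - Real.log A) - (1 + δ) * c)
      ≤ ENNReal.ofReal (∫ t in Ioc A B, g t) := by
        apply ENNReal.ofReal_le_ofReal
        rw [hgval]
        have hBB : B ^ (-α) * B ^ α = 1 := by
          rw [← Real.rpow_add hB0]; simp
        have hnn : 0 ≤ B ^ (-α) * A ^ α :=
          mul_nonneg (Real.rpow_nonneg hB0.le _) (Real.rpow_nonneg hA0.le _)
        have h5 : (1 + δ) * (c * B ^ (-α)) * (B ^ α - A ^ α)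
            = (1 + δ) * c - (1 + δ) * c * (B ^ (-α) * A ^ α) := by
          linear_combination ((1 + δ) * c) * hBB
        nlinarith [mul_nonneg (mul_nonneg (by linarith : (0:ℝ) ≤ 1 + δ) hc.le) hnn]
    _ ≤ ∫⁻ t in Ioc A B, ENNReal.ofReal (g t) := stmt8_ofReal_int_le measurableSet_Ioc hgint
    _ ≤ ∫⁻ t in Ioc A B, μ (Ioc t B) * ENNReal.ofReal (α * t ^ (α - 1)) := key
    _ ≤ ∫⁻ t in Ioi 0, μ (Ioc t B) * ENNReal.ofReal (α * t ^ (α - 1)) :=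
        lintegral_mono_set (fun x (hx : x ∈ Ioc A B) => lt_of_lt_of_le hA0 hx.1.le)

lemma stmt8_prod_formula (μ ν : Measure ℝ) [IsProbabilityMeasure μ] [IsProbabilityMeasure ν]
    (hν0 : ν (Iio 0) = 0) {t : ℝ} (ht : 0 < t) :
    (μ.prod ν) {p : ℝ × ℝ | t < p.1 * p.2} = ∫⁻ x in Ioi 0, ν (Ioi (t / x)) ∂μ := by
  have hmeas : MeasurableSet {p : ℝ × ℝ | t < p.1 * p.2} :=
    measurableSet_lt measurable_const (measurable_fst.mul measurable_snd)
  rw [Measure.prod_apply hmeas]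
  have key : ∀ x : ℝ, Prod.mk x ⁻¹' {p : ℝ × ℝ | t < p.1 * p.2} = {y | t < x * y} :=
    fun x => rfl
  rw [← lintegral_add_compl (fun x => ν (Prod.mk x ⁻¹' {p : ℝ × ℝ | t < p.1 * p.2}))
    (measurableSet_Ioi (a := (0:ℝ)))]
  have hcompl : ∫⁻ x in (Ioi (0:ℝ))ᶜ, ν (Prod.mk x ⁻¹' {p : ℝ × ℝ | t < p.1 * p.2}) ∂μ = 0 := by
    rw [setLIntegral_congr_fun (measurableSet_Ioi (a := (0:ℝ))).compl
      (fun x hx => ?_), lintegral_zero]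
    rw [key]
    refine measure_mono_null (fun y hy => ?_) hν0
    simp only [mem_setOf_eq] at hy
    simp only [mem_Iio]
    by_contra hy0
    push_neg at hy0
    have hx0 : x ≤ 0 := by simpa using hx
    nlinarith
  rw [hcompl, add_zero]
  refine setLIntegral_congr_fun measurableSet_Ioi (fun x hx => ?_)
  rw [key]
  congr 1
  ext y
  simp only [mem_setOf_eq, mem_Ioi]
  rw [div_lt_iff₀ (show (0:ℝ) < x from hx), mul_comm]
set_option maxHeartbeats 1000000 in
/-- Critical case of the product of two independent nonnegative random variables with
power tails of the same index: if `P(X > t) ~ c_x t^{-α}` and `P(Y > t) ~ c_y t^{-α}`,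
then `P(XY > t) ~ α c_x c_y t^{-α} log t`. -/
theorem stmt8 {Ω : Type*} [MeasurableSpace Ω] (ℙ : Measure Ω) [IsProbabilityMeasure ℙ]
    (X Y : Ω → ℝ) (hX : Measurable X) (hY : Measurable Y)
    (hX0 : ∀ ω, 0 ≤ X ω) (hY0 : ∀ ω, 0 ≤ Y ω)
    (hindep : ProbabilityTheory.IndepFun X Y ℙ)
    (cx cy α : ℝ) (hcx : 0 < cx) (hcy : 0 < cy) (hα : 0 < α)
    (hXtail : Tendsto (fun t => (ℙ {ω | t < X ω}).toReal / (cx * t ^ (-α))) atTop (nhds 1))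
    (hYtail : Tendsto (fun t => (ℙ {ω | t < Y ω}).toReal / (cy * t ^ (-α))) atTop (nhds 1)) :
    Tendsto (fun t => (ℙ {ω | t < X ω * Y ω}).toReal /
      (α * cx * cy * t ^ (-α) * Real.log t)) atTop (nhds 1) := by
  set μ := ℙ.map X with hμdef
  set ν := ℙ.map Y with hνdef
  have hμinst : IsProbabilityMeasure μ := Measure.isProbabilityMeasure_map hX.aemeasurable
  have hνinst : IsProbabilityMeasure ν := Measure.isProbabilityMeasure_map hY.aemeasurable
  have hμIoi : ∀ s : ℝ, μ (Ioi s) = ℙ {ω | s < X ω} := fun s => by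
    rw [hμdef, Measure.map_apply hX measurableSet_Ioi]; rfl
  have hνIoi : ∀ s : ℝ, ν (Ioi s) = ℙ {ω | s < Y ω} := fun s => by
    rw [hνdef, Measure.map_apply hY measurableSet_Ioi]; rfl
  have hν0 : ν (Iio 0) = 0 := by
    rw [hνdef, Measure.map_apply hY measurableSet_Iio]
    have : Y ⁻¹' (Iio 0) = ∅ := by
      ext ω; simp only [mem_preimage, mem_Iio, mem_empty_iff_false, iff_false, not_lt]
      exact hY0 ω
    rw [this, measure_empty]
  have hmap : ℙ.map (fun ω => (X ω, Y ω)) = μ.prod ν :=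
    (ProbabilityTheory.indepFun_iff_map_prod_eq_prod_map_map hX.aemeasurable
      hY.aemeasurable).mp hindep
  have hP : ∀ t : ℝ, 0 < t →
      ℙ {ω | t < X ω * Y ω} = ∫⁻ x in Ioi 0, ν (Ioi (t / x)) ∂μ := by
    intro t ht
    have h1 : ℙ {ω | t < X ω * Y ω}
        = (ℙ.map (fun ω => (X ω, Y ω))) {p : ℝ × ℝ | t < p.1 * p.2} := by
      rw [Measure.map_apply (hX.prodMk hY) (s := {p : ℝ × ℝ | t < p.1 * p.2})
        (measurableSet_lt measurable_const (measurable_fst.mul measurable_snd))]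
      rfl
    rw [h1, hmap, stmt8_prod_formula μ ν hν0 ht]
  -- tail limits for μ and ν
  have hXt : Tendsto (fun t => (μ (Ioi t)).toReal / (cx * t ^ (-α))) atTop (nhds 1) := by
    simp_rw [hμIoi]; exact hXtail
  have hYt : Tendsto (fun t => (ν (Ioi t)).toReal / (cy * t ^ (-α))) atTop (nhds 1) := by
    simp_rw [hνIoi]; exact hYtail
  rw [Metric.tendsto_nhds]
  intro ε hε
  set δ : ℝ := min (ε / 5) (1 / 2) with hδdef
  have hδ0 : 0 < δ := lt_min (by linarith) (by norm_num)
  have hδhalf : δ ≤ 1 / 2 := min_le_right _ _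
  have hδε : δ ≤ ε / 5 := min_le_left _ _
  -- obtain A
  obtain ⟨A₀, hA₀⟩ := eventually_atTop.mp
    ((stmt8_tail_ev μ cx α δ hδ0 hcx hXt).and (stmt8_tail_ev ν cy α δ hδ0 hcy hYt))
  set A : ℝ := max A₀ 1 with hAdef
  have hA1 : (1:ℝ) ≤ A := le_max_right _ _
  have hA0 : (0:ℝ) < A := lt_of_lt_of_le zero_lt_one hA1
  have hμlo : ∀ s, A ≤ s → (1 - δ) * (cx * s ^ (-α)) ≤ (μ (Ioi s)).toReal :=
    fun s hs => (hA₀ s (le_trans (le_max_left _ _) hs)).1.1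
  have hμup : ∀ s, A ≤ s → (μ (Ioi s)).toReal ≤ (1 + δ) * (cx * s ^ (-α)) :=
    fun s hs => (hA₀ s (le_trans (le_max_left _ _) hs)).1.2
  have hνlo : ∀ s, A ≤ s → (1 - δ) * (cy * s ^ (-α)) ≤ (ν (Ioi s)).toReal :=
    fun s hs => (hA₀ s (le_trans (le_max_left _ _) hs)).2.1
  have hνup : ∀ s, A ≤ s → (ν (Ioi s)).toReal ≤ (1 + δ) * (cy * s ^ (-α)) :=
    fun s hs => (hA₀ s (le_trans (le_max_left _ _) hs)).2.2
  set la := Real.log A with hladef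
  have hla0 : 0 ≤ la := Real.log_nonneg hA1
  -- eventual conditions on t
  have ev1 : ∀ᶠ t : ℝ in atTop, 1 < t := eventually_gt_atTop 1
  have ev2 : ∀ᶠ t : ℝ in atTop, A * A ≤ t := eventually_ge_atTop (A * A)
  have ev3 : ∀ᶠ t : ℝ in atTop,
      (1 + δ) * (A ^ α) * (cx + cy) / (δ * (α * cx * cy)) ≤ Real.log t :=
    Real.tendsto_log_atTop.eventually_ge_atTop _
  have ev4 : ∀ᶠ t : ℝ in atTop, (2 * α * la + 1) / (δ * α) ≤ Real.log t :=
    Real.tendsto_log_atTop.eventually_ge_atTop _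
  filter_upwards [ev1, ev2, ev3, ev4] with t ht1 ht2 ht3 ht4
  have ht0 : (0:ℝ) < t := lt_trans zero_lt_one ht1
  set L := Real.log t with hLdef
  have hL0 : 0 < L := Real.log_pos ht1
  set τ := t ^ (-α) with hτdef
  have hτ0 : (0:ℝ) < τ := Real.rpow_pos_of_pos ht0 _
  set B := t / A with hBdef
  have hB0 : (0:ℝ) < B := div_pos ht0 hA0
  have hAB : A ≤ B := (le_div_iff₀ hA0).mpr ht2
  have hB1 : (1:ℝ) ≤ B := le_trans hA1 hAB
  have hlogB : Real.log B = L - la := by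
    rw [hBdef, Real.log_div (ne_of_gt ht0) (ne_of_gt hA0)]
  have hBα : B ^ (-α) = A ^ α * τ := by
    rw [hBdef, Real.div_rpow ht0.le hA0.le, Real.rpow_neg hA0.le, div_eq_mul_inv,
      inv_inv, mul_comm]
  -- T B and its bounds
  set T := ∫⁻ x in Ioc 0 B, ENNReal.ofReal (x ^ α) ∂μ with hTdef
  have Tup : T ≤ ENNReal.ofReal (A ^ α + α * ((1 + δ) * cx) * Real.log B) :=
    stmt8_trunc_upper μ hα hcx hδ0 hA1 hAB hμup
  have Tlo : ENNReal.ofReal (α * ((1 - δ) * cx) * (Real.log B - la) - (1 + δ) * cx) ≤ T :=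
    stmt8_trunc_lower μ hα hcx hδ0 hA1 hAB hμlo hμup
  have hTne : T ≠ ⊤ := ne_top_of_le_ne_top ENNReal.ofReal_ne_top Tup
  set TR := T.toReal with hTRdef
  have TRub : TR ≤ A ^ α + α * ((1 + δ) * cx) * (L - la) := by
    calc TR ≤ (ENNReal.ofReal (A ^ α + α * ((1 + δ) * cx) * Real.log B)).toReal :=
          ENNReal.toReal_mono ENNReal.ofReal_ne_top Tup
      _ = A ^ α + α * ((1 + δ) * cx) * Real.log B := by
          rw [ENNReal.toReal_ofReal]
          have : 0 ≤ Real.log B := Real.log_nonneg hB1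
          positivity
      _ = A ^ α + α * ((1 + δ) * cx) * (L - la) := by rw [hlogB]
  have TRlb : α * ((1 - δ) * cx) * (L - la - la) - (1 + δ) * cx ≤ TR := by
    have h2 := ENNReal.toReal_mono hTne Tlo
    rw [hlogB] at h2
    have h1 : α * ((1 - δ) * cx) * (L - la - la) - (1 + δ) * cx
        ≤ (ENNReal.ofReal (α * ((1 - δ) * cx) * (L - la - la) - (1 + δ) * cx)).toReal := by
      rw [ENNReal.toReal_ofReal']
      exact le_max_left _ _
    exact le_trans h1 h2
  -- ENNReal bounds on P(t)
  have hPt : ℙ {ω | t < X ω * Y ω} = ∫⁻ x in Ioi 0, ν (Ioi (t / x)) ∂μ := hP t ht0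
  have hsplit : ∫⁻ x in Ioi 0, ν (Ioi (t / x)) ∂μ
      = (∫⁻ x in Ioc 0 B, ν (Ioi (t / x)) ∂μ) + ∫⁻ x in Ioi B, ν (Ioi (t / x)) ∂μ := by
    rw [← Ioc_union_Ioi_eq_Ioi hB0.le, lintegral_union measurableSet_Ioi Ioc_disjoint_Ioi_same]
  have hxA : ∀ x ∈ Ioc 0 B, A ≤ t / x := by
    intro x hx
    rw [le_div_iff₀ hx.1]
    calc A * x ≤ A * B := by nlinarith [hx.2, hA0]
      _ = t := by rw [hBdef]; field_simp
  have hxpow : ∀ x ∈ Ioc 0 B, (t / x) ^ (-α) = τ * x ^ α := by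
    intro x hx
    rw [Real.div_rpow ht0.le hx.1.le, Real.rpow_neg hx.1.le, div_eq_mul_inv, inv_inv]
  have upper1 : ∫⁻ x in Ioc 0 B, ν (Ioi (t / x)) ∂μ
      ≤ ENNReal.ofReal ((1 + δ) * (cy * τ)) * T := by
    calc ∫⁻ x in Ioc 0 B, ν (Ioi (t / x)) ∂μ
        ≤ ∫⁻ x in Ioc 0 B,
            ENNReal.ofReal ((1 + δ) * (cy * τ)) * ENNReal.ofReal (x ^ α) ∂μ := by
          refine lintegral_mono_ae ?_
          filter_upwards [ae_restrict_mem measurableSet_Ioc] with x hx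
          calc ν (Ioi (t / x)) = ENNReal.ofReal ((ν (Ioi (t / x))).toReal) :=
                (ENNReal.ofReal_toReal (measure_ne_top ν _)).symm
            _ ≤ ENNReal.ofReal ((1 + δ) * (cy * (t / x) ^ (-α))) :=
                ENNReal.ofReal_le_ofReal (hνup _ (hxA x hx))
            _ = ENNReal.ofReal ((1 + δ) * (cy * τ)) * ENNReal.ofReal (x ^ α) := by
                rw [hxpow x hx, ← ENNReal.ofReal_mul (by positivity)]
                ring_nf
      _ = ENNReal.ofReal ((1 + δ) * (cy * τ)) * T :=
          lintegral_const_mul' _ _ ENNReal.ofReal_ne_top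
  have upper2 : ∫⁻ x in Ioi B, ν (Ioi (t / x)) ∂μ
      ≤ ENNReal.ofReal ((1 + δ) * (cx * (A ^ α * τ))) := by
    calc ∫⁻ x in Ioi B, ν (Ioi (t / x)) ∂μ ≤ ∫⁻ _x in Ioi B, 1 ∂μ :=
          lintegral_mono_ae (Eventually.of_forall fun x => prob_le_one)
      _ = μ (Ioi B) := by rw [setLIntegral_one]
      _ = ENNReal.ofReal ((μ (Ioi B)).toReal) :=
          (ENNReal.ofReal_toReal (measure_ne_top μ _)).symm
      _ ≤ ENNReal.ofReal ((1 + δ) * (cx * B ^ (-α))) :=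
          ENNReal.ofReal_le_ofReal (hμup B hAB)
      _ = _ := by rw [hBα]
  have lower1 : ENNReal.ofReal ((1 - δ) * (cy * τ)) * T
      ≤ ∫⁻ x in Ioc 0 B, ν (Ioi (t / x)) ∂μ := by
    rw [← lintegral_const_mul' _ _ (ENNReal.ofReal_ne_top (r := (1 - δ) * (cy * τ)))]
    refine lintegral_mono_ae ?_
    filter_upwards [ae_restrict_mem measurableSet_Ioc] with x hx
    have h1δ : (0:ℝ) ≤ 1 - δ := by linarith
    calc ENNReal.ofReal ((1 - δ) * (cy * τ)) * ENNReal.ofReal (x ^ α)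
        = ENNReal.ofReal ((1 - δ) * (cy * (t / x) ^ (-α))) := by
          rw [hxpow x hx, ← ENNReal.ofReal_mul (by positivity)]; ring_nf
      _ ≤ ENNReal.ofReal ((ν (Ioi (t / x))).toReal) :=
          ENNReal.ofReal_le_ofReal (hνlo _ (hxA x hx))
      _ = ν (Ioi (t / x)) := ENNReal.ofReal_toReal (measure_ne_top ν _)
  -- real bounds
  set P := (ℙ {ω | t < X ω * Y ω}).toReal with hPdef
  have h1δ : (0:ℝ) ≤ 1 - δ := by linarith
  have Pub : P ≤ (1 + δ) * (cy * τ) * TR + (1 + δ) * (cx * (A ^ α * τ)) := by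
    have he : ℙ {ω | t < X ω * Y ω}
        ≤ ENNReal.ofReal ((1 + δ) * (cy * τ)) * T
          + ENNReal.ofReal ((1 + δ) * (cx * (A ^ α * τ))) := by
      rw [hPt, hsplit]; exact add_le_add upper1 upper2
    have hne : ENNReal.ofReal ((1 + δ) * (cy * τ)) * T
        + ENNReal.ofReal ((1 + δ) * (cx * (A ^ α * τ))) ≠ ⊤ :=
      ENNReal.add_ne_top.mpr
        ⟨ENNReal.mul_ne_top ENNReal.ofReal_ne_top hTne, ENNReal.ofReal_ne_top⟩
    have hmono := ENNReal.toReal_mono hne he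
    rwa [ENNReal.toReal_add (ENNReal.mul_ne_top ENNReal.ofReal_ne_top hTne)
        ENNReal.ofReal_ne_top,
      ENNReal.toReal_mul, ENNReal.toReal_ofReal (by positivity),
      ENNReal.toReal_ofReal (by positivity)] at hmono
  have Plb : (1 - δ) * (cy * τ) * TR ≤ P := by
    have he : ENNReal.ofReal ((1 - δ) * (cy * τ)) * T ≤ ℙ {ω | t < X ω * Y ω} := by
      rw [hPt, hsplit]
      exact le_trans lower1 le_self_add
    have hmono := ENNReal.toReal_mono (measure_ne_top ℙ _) he
    rwa [ENNReal.toReal_mul, ENNReal.toReal_ofReal (by positivity)] at hmono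
  -- final arithmetic
  set D := α * cx * cy * τ * L with hDdef
  clear hPt hsplit hxA hxpow upper1 upper2 lower1 Tup Tlo hTne hP hXt hYt hμlo hμup hνlo
    hνup hA₀ hmap hν0 hμIoi hνIoi ev1 ev2 ev3 ev4 hXtail hYtail hindep hX hY hX0 hY0
    hμdef hνdef hTdef hTRdef hPdef hlogB hBα hB0 hAB hB1 ht2 hμinst hνinst
  clear_value T TR P D τ L B
  have hD0 : 0 < D := by
    rw [hDdef]
    exact mul_pos (mul_pos (mul_pos (mul_pos hα hcx) hcy) hτ0) hL0
  have hApow : (0:ℝ) ≤ A ^ α := Real.rpow_nonneg hA0.le _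
  have hL3 : (1 + δ) * A ^ α * (cx + cy) ≤ δ * (α * cx * cy) * L := by
    rw [div_le_iff₀ (by positivity)] at ht3
    linarith [ht3]
  have hL4 : 2 * α * la + 1 ≤ δ * α * L := by
    rw [div_le_iff₀ (by positivity)] at ht4
    linarith [ht4]
  have hδδ : 0 ≤ δ - δ * δ := by
    have h := mul_nonneg hδ0.le (show (0:ℝ) ≤ 1 - δ from by linarith)
    linear_combination h
  have keycore : (1 + δ) * cy * (A ^ α + α * ((1 + δ) * cx) * (L - la))
      + (1 + δ) * (cx * A ^ α) ≤ (1 + 4 * δ) * (α * cx * cy * L) := by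
    nlinarith [hL3, mul_nonneg (le_of_lt (mul_pos (mul_pos (mul_pos hα hcx) hcy) hL0)) hδδ,
      mul_nonneg (mul_nonneg (mul_nonneg
        (mul_nonneg hα.le (by nlinarith : (0:ℝ) ≤ (1 + δ) * (1 + δ))) hcx.le) hcy.le) hla0]
  have keycore2 : (1 - 3 * δ) * (α * cx * cy * L)
      ≤ (1 - δ) * cy * (α * ((1 - δ) * cx) * (L - la - la) - (1 + δ) * cx) := by
    have hm4 : (2 * α * la + 1) * (cx * cy) ≤ δ * α * L * (cx * cy) :=
      mul_le_mul_of_nonneg_right hL4 (by positivity)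
    nlinarith [hm4,
      mul_nonneg (mul_nonneg (mul_nonneg (mul_nonneg hα.le hcx.le) hcy.le) hL0.le)
        (mul_nonneg hδ0.le hδ0.le),
      mul_nonneg (mul_nonneg (mul_nonneg (mul_nonneg hα.le hcx.le) hcy.le) hla0)
        (by nlinarith : (0:ℝ) ≤ 2 * δ - δ * δ),
      mul_nonneg (mul_nonneg hcx.le hcy.le) (mul_nonneg hδ0.le hδ0.le)]
  have keyU : P ≤ (1 + 4 * δ) * D := by
    have h2 : (1 + δ) * cy * TR ≤ (1 + δ) * cy * (A ^ α + α * ((1 + δ) * cx) * (L - la)) :=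
      mul_le_mul_of_nonneg_left TRub (by positivity)
    have h3 : ((1 + δ) * cy * (A ^ α + α * ((1 + δ) * cx) * (L - la))
        + (1 + δ) * (cx * A ^ α)) * τ ≤ ((1 + 4 * δ) * (α * cx * cy * L)) * τ :=
      mul_le_mul_of_nonneg_right keycore hτ0.le
    have heq : (1 + 4 * δ) * D = (1 + 4 * δ) * (α * cx * cy * L) * τ := by
      rw [hDdef]; ring
    rw [heq]
    nlinarith [mul_le_mul_of_nonneg_right h2 hτ0.le]
  have keyL : (1 - 3 * δ) * D ≤ P := by
    have h2 : (1 - δ) * cy * (α * ((1 - δ) * cx) * (L - la - la) - (1 + δ) * cx)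
        ≤ (1 - δ) * cy * TR :=
      mul_le_mul_of_nonneg_left TRlb (by positivity)
    have h3 : ((1 - 3 * δ) * (α * cx * cy * L)) * τ
        ≤ ((1 - δ) * cy * (α * ((1 - δ) * cx) * (L - la - la) - (1 + δ) * cx)) * τ :=
      mul_le_mul_of_nonneg_right keycore2 hτ0.le
    have heq : (1 - 3 * δ) * D = (1 - 3 * δ) * (α * cx * cy * L) * τ := by
      rw [hDdef]; ring
    rw [heq]
    nlinarith [mul_le_mul_of_nonneg_right h2 hτ0.le]
  have hQub : P / D ≤ 1 + 4 * δ := (div_le_iff₀ hD0).mpr (by linarith)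
  have hQlb : 1 - 3 * δ ≤ P / D := (le_div_iff₀ hD0).mpr (by linarith)
  rw [Real.dist_eq, abs_sub_lt_iff]
  constructor <;> nlinarith [hδε, hε]
end

section
/- Let X and Y be independent real random variables with X symmetric, P(|X| > t) ~ c_x·t^{-α_x}, and let τ : ℝ → ℝ satisfy P(|τ(Y)| > t) ~ c_y·t^{-α_y/γ} with α_y/γ > α_x, and E[|τ(Y)|^{α_x}] < ∞. Then Z = X·τ(Y) satisfies P(|Z| > t) ~ c_x·E[|τ(Y)|^{α_x}]·t^{-α_x} as t → +∞. -/
open MeasureTheory Filter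

/-- Sub-critical case: if `X`, `Y` are independent, `X` symmetric with
`P(|X| > t) ~ c_x t^{-α_x}`, `P(|τ(Y)| > t) ~ c_y t^{-α_y/γ}` with `α_y/γ > α_x` and
`E|τ(Y)|^{α_x} < ∞`, then `Z = X τ(Y)` has `P(|Z| > t) ~ c_x E|τ(Y)|^{α_x} t^{-α_x}`. -/
theorem stmt13 {Ω : Type*} [MeasurableSpace Ω] (ℙ : Measure Ω) [IsProbabilityMeasure ℙ]
    (X Y : Ω → ℝ) (τ : ℝ → ℝ) (hX : Measurable X) (hY : Measurable Y) (hτ : Measurable τ)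
    (hindep : ProbabilityTheory.IndepFun X Y ℙ)
    (hXsym : Measure.map X ℙ = Measure.map (fun ω => -X ω) ℙ)
    (cx cy αx αy γ : ℝ) (hcx : 0 < cx) (hcy : 0 < cy) (hαx : 0 < αx) (hαy : 0 < αy)
    (hγ : 0 < γ) (hcrit : αx < αy / γ)
    (hXtail : Tendsto (fun t => (ℙ {ω | t < |X ω|}).toReal / (cx * t ^ (-αx))) atTop (nhds 1))
    (hτtail : Tendsto (fun t => (ℙ {ω | t < |τ (Y ω)|}).toReal / (cy * t ^ (-(αy / γ))))
      atTop (nhds 1))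
    (hmom : Integrable (fun ω => |τ (Y ω)| ^ αx) ℙ) :
    Tendsto (fun t => (ℙ {ω | t < |X ω * τ (Y ω)|}).toReal /
      (cx * (∫ ω, |τ (Y ω)| ^ αx ∂ℙ) * t ^ (-αx))) atTop (nhds 1) := by
  classical
  have hA : Measurable (fun ω => |X ω|) := hX.abs
  have hB : Measurable (fun ω => |τ (Y ω)|) := (hτ.comp hY).abs
  have hg : Measurable (fun s : ℝ => |s| ^ αx) :=
    ((Real.continuous_rpow_const hαx.le).comp continuous_abs).measurable
  set μ : Measure ℝ := Measure.map (fun ω => |X ω|) ℙ with hμdef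
  set ν : Measure ℝ := Measure.map (fun ω => |τ (Y ω)|) ℙ with hνdef
  haveI hμp : IsProbabilityMeasure μ := Measure.isProbabilityMeasure_map hA.aemeasurable
  haveI hνp : IsProbabilityMeasure ν := Measure.isProbabilityMeasure_map hB.aemeasurable
  have hABindep : ProbabilityTheory.IndepFun (fun ω => |X ω|) (fun ω => |τ (Y ω)|) ℙ :=
    hindep.comp measurable_abs (measurable_abs.comp hτ)
  have hprod : Measure.map (fun ω => (|X ω|, |τ (Y ω)|)) ℙ = μ.prod ν :=
    (ProbabilityTheory.indepFun_iff_map_prod_eq_prod_map_map hA.aemeasurable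
      hB.aemeasurable).mp hABindep
  have hSt : ∀ t : ℝ, MeasurableSet {p : ℝ × ℝ | t < p.1 * p.2} := fun t =>
    measurableSet_lt measurable_const (measurable_fst.mul measurable_snd)
  -- the key product representation
  have hkey : ∀ t : ℝ, ℙ {ω | t < |X ω * τ (Y ω)|} = ∫⁻ s, μ {x | t < x * s} ∂ν := by
    intro t
    have hset : {ω | t < |X ω * τ (Y ω)|}
        = (fun ω => (|X ω|, |τ (Y ω)|)) ⁻¹' {p : ℝ × ℝ | t < p.1 * p.2} := by
      ext ω; simp [abs_mul]
    rw [hset, ← Measure.map_apply (hA.prodMk hB) (hSt t), hprod,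
      Measure.prod_apply_symm (hSt t)]
    rfl
  have hGeq : ∀ u : ℝ, μ (Set.Ioi u) = ℙ {ω | u < |X ω|} := by
    intro u
    rw [hμdef, Measure.map_apply hA measurableSet_Ioi]
    rfl
  have hmeasF : ∀ t : ℝ, Measurable fun s => μ {x : ℝ | t < x * s} := fun t =>
    measurable_measure_prodMk_right (hSt t)
  -- a.e. nonnegativity under ν
  have hνae : ∀ᵐ s ∂ν, 0 ≤ s := by
    rw [ae_iff]
    have h1 : {s : ℝ | ¬ 0 ≤ s} = Set.Iio 0 := by ext s; simp
    rw [h1, hνdef, Measure.map_apply hB measurableSet_Iio]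
    have h2 : (fun ω => |τ (Y ω)|) ⁻¹' Set.Iio 0 = ∅ := by
      ext ω
      simp only [Set.mem_preimage, Set.mem_Iio, Set.mem_empty_iff_false, iff_false, not_lt]
      exact abs_nonneg _
    rw [h2, measure_empty]
  -- the moment as an integral over ν
  have hνint : Integrable (fun s => |s| ^ αx) ν := by
    rw [hνdef, integrable_map_measure hg.aestronglyMeasurable hB.aemeasurable]
    simpa [Function.comp_def, abs_abs] using hmom
  have hνI : (∫ s, |s| ^ αx ∂ν) = ∫ ω, |τ (Y ω)| ^ αx ∂ℙ := by
    rw [hνdef, integral_map hB.aemeasurable hg.aestronglyMeasurable]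
    simp [abs_abs]
  -- tail bound for X
  obtain ⟨u0', hu0'⟩ := eventually_atTop.1
    (hXtail.eventually (eventually_le_nhds one_lt_two))
  set u0 : ℝ := max u0' 1 with hu0def
  have hu0pos : (0:ℝ) < u0 := lt_of_lt_of_le one_pos (le_max_right _ _)
  have hGle : ∀ u : ℝ, u0 ≤ u → (ℙ {ω | u < |X ω|}).toReal ≤ 2 * (cx * u ^ (-αx)) := by
    intro u hu
    have hupos : 0 < u := lt_of_lt_of_le hu0pos hu
    have hdpos : 0 < cx * u ^ (-αx) := mul_pos hcx (Real.rpow_pos_of_pos hupos _)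
    exact (div_le_iff₀ hdpos).mp (hu0' u (le_trans (le_max_left _ _) hu))
  set C : ℝ := 2 + u0 ^ αx / cx with hCdef
  have hCu : u0 ^ αx / cx ≤ C := by
    rw [hCdef]; linarith
  have hC2 : (2:ℝ) ≤ C := by
    have : 0 ≤ u0 ^ αx / cx := div_nonneg (Real.rpow_pos_of_pos hu0pos _).le hcx.le
    rw [hCdef]; linarith
  -- rpow algebra
  have hrpow : ∀ t s : ℝ, 0 < t → 0 < s → (t / s) ^ (-αx) = t ^ (-αx) * s ^ αx := by
    intro t s ht hs
    rw [Real.div_rpow ht.le hs.le, Real.rpow_neg hs.le, div_inv_eq_mul]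
  -- the normalized integrand
  set F : ℝ → ℝ → ℝ := fun t s => (μ {x : ℝ | t < x * s}).toReal / (cx * t ^ (-αx)) with hFdef
  have hFint : ∀ t : ℝ, (∫ s, F t s ∂ν)
      = (ℙ {ω | t < |X ω * τ (Y ω)|}).toReal / (cx * t ^ (-αx)) := by
    intro t
    rw [hkey t, ← integral_toReal (hmeasF t).aemeasurable
      (Eventually.of_forall fun s => measure_lt_top μ _), ← integral_div]
  -- pointwise identification for s > 0
  have hFval : ∀ t s : ℝ, 0 < s → μ {x : ℝ | t < x * s} = ℙ {ω | t / s < |X ω|} := by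
    intro t s hs
    have h1 : {x : ℝ | t < x * s} = Set.Ioi (t / s) := by
      ext x; simp [Set.mem_Ioi, div_lt_iff₀ hs]
    rw [h1, hGeq]
  -- dominated convergence
  have hmain : Tendsto (fun t => ∫ s, F t s ∂ν) atTop (nhds (∫ s, |s| ^ αx ∂ν)) := by
    apply tendsto_integral_filter_of_dominated_convergence (fun s => C * |s| ^ αx)
    · exact Eventually.of_forall fun t =>
        (((hmeasF t).ennreal_toReal).div_const _).aestronglyMeasurable
    · filter_upwards [eventually_ge_atTop u0] with t ht
      filter_upwards [hνae] with s hs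
      have htpos : 0 < t := lt_of_lt_of_le hu0pos ht
      have htp : (0:ℝ) < t ^ (-αx) := Real.rpow_pos_of_pos htpos _
      have hdpos : 0 < cx * t ^ (-αx) := mul_pos hcx htp
      have hFnn : 0 ≤ F t s := div_nonneg ENNReal.toReal_nonneg hdpos.le
      rw [Real.norm_of_nonneg hFnn]
      rcases eq_or_lt_of_le hs with hs0 | hspos
      · subst hs0
        have hempty : {x : ℝ | t < 0} = ∅ :=
          Set.eq_empty_of_forall_notMem fun x hx => absurd hx (not_lt.2 htpos.le)
        simp [hFdef, hempty, Real.zero_rpow hαx.ne']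
      · rw [abs_of_pos hspos]
        have hsp : (0:ℝ) < s ^ αx := Real.rpow_pos_of_pos hspos _
        rcases le_or_gt s (t / u0) with hcase | hcase
        · -- small s : use the tail bound
          have hts : u0 ≤ t / s := by
            rw [le_div_iff₀ hspos]
            calc u0 * s ≤ u0 * (t / u0) := mul_le_mul_of_nonneg_left hcase hu0pos.le
            _ = t := by field_simp
          have hb := hGle (t / s) hts
          have heq : F t s = (ℙ {ω | t / s < |X ω|}).toReal / (cx * t ^ (-αx)) := by
            simp only [hFdef, hFval t s hspos]
          calc F t s ≤ 2 * (cx * (t / s) ^ (-αx)) / (cx * t ^ (-αx)) := by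
                rw [heq]; gcongr
            _ = 2 * s ^ αx := by
                rw [hrpow t s htpos hspos]
                field_simp
            _ ≤ C * s ^ αx := mul_le_mul_of_nonneg_right hC2 hsp.le
        · -- large s : crude bound by 1
          have h1 : (μ {x : ℝ | t < x * s}).toReal ≤ 1 := by
            simpa using ENNReal.toReal_mono ENNReal.one_ne_top (prob_le_one (μ := μ))
          have hlt : t ≤ s * u0 := ((div_lt_iff₀ hu0pos).mp hcase).le
          calc F t s ≤ 1 / (cx * t ^ (-αx)) := by
                simp only [hFdef]; gcongr
            _ = t ^ αx / cx := by
                rw [Real.rpow_neg htpos.le]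
                field_simp
            _ ≤ (s * u0) ^ αx / cx := by
                have := Real.rpow_le_rpow htpos.le hlt hαx.le
                gcongr
            _ = (u0 ^ αx / cx) * s ^ αx := by
                rw [Real.mul_rpow hspos.le hu0pos.le]; ring
            _ ≤ C * s ^ αx := mul_le_mul_of_nonneg_right hCu hsp.le
    · exact hνint.const_mul C
    · filter_upwards [hνae] with s hs
      rcases eq_or_lt_of_le hs with hs0 | hspos
      · subst hs0
        have hev : ∀ᶠ t in atTop, F t 0 = |(0:ℝ)| ^ αx := by
          filter_upwards [eventually_gt_atTop (0:ℝ)] with t ht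
          have hempty : {x : ℝ | t < 0} = ∅ :=
            Set.eq_empty_of_forall_notMem fun x hx => absurd hx (not_lt.2 ht.le)
          simp [hFdef, hempty, Real.zero_rpow hαx.ne']
        exact Tendsto.congr' (hev.mono fun t h => h.symm) tendsto_const_nhds
      · rw [abs_of_pos hspos]
        have hcomp : Tendsto (fun t : ℝ => t / s) atTop atTop :=
          tendsto_id.atTop_div_const hspos
        have h1 := (hXtail.comp hcomp).mul_const (s ^ αx)
        rw [one_mul] at h1
        refine Tendsto.congr' ?_ h1
        filter_upwards [eventually_gt_atTop (0:ℝ)] with t ht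
        have h2 : (t / s) ^ (-αx) = t ^ (-αx) * s ^ αx := hrpow t s ht hspos
        have hsp : (0:ℝ) < s ^ αx := Real.rpow_pos_of_pos hspos _
        have htp : (0:ℝ) < t ^ (-αx) := Real.rpow_pos_of_pos ht _
        simp only [Function.comp_def, hFdef, hFval t s hspos]
        rw [h2]
        field_simp
  -- positivity of the moment
  have hIpos : 0 < ∫ ω, |τ (Y ω)| ^ αx ∂ℙ := by
    obtain ⟨t1, ht1, ht1pos⟩ := ((hτtail.eventually
      (eventually_ge_nhds (by norm_num : (1:ℝ)/2 < 1))).and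
      (eventually_gt_atTop (0:ℝ))).exists
    have hdpos : 0 < cy * t1 ^ (-(αy/γ)) := mul_pos hcy (Real.rpow_pos_of_pos ht1pos _)
    have hnum : 0 < (ℙ {ω | t1 < |τ (Y ω)|}).toReal := by
      by_contra h
      push_neg at h
      have h0 : (ℙ {ω | t1 < |τ (Y ω)|}).toReal = 0 := le_antisymm h ENNReal.toReal_nonneg
      rw [h0, zero_div] at ht1
      linarith
    have hne : ℙ {ω | t1 < |τ (Y ω)|} ≠ 0 := by
      intro h0; rw [h0] at hnum; simp at hnum
    refine (integral_pos_iff_support_of_nonneg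
      (fun ω => Real.rpow_nonneg (abs_nonneg _) _) hmom).mpr ?_
    refine lt_of_lt_of_le (pos_iff_ne_zero.mpr hne) (measure_mono ?_)
    intro ω hω
    have hpos : 0 < |τ (Y ω)| := lt_trans ht1pos hω
    simp only [Function.mem_support]
    exact (Real.rpow_pos_of_pos hpos αx).ne'
  -- assemble
  have hmain' : Tendsto (fun t => (ℙ {ω | t < |X ω * τ (Y ω)|}).toReal / (cx * t ^ (-αx)))
      atTop (nhds (∫ ω, |τ (Y ω)| ^ αx ∂ℙ)) := by
    rw [← hνI]
    exact hmain.congr hFint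
  have hfinal := hmain'.div_const (∫ ω, |τ (Y ω)| ^ αx ∂ℙ)
  rw [div_self hIpos.ne'] at hfinal
  refine hfinal.congr fun t => ?_
  rw [div_div]
  ring_nf
end
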